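/- arXiv:1606.06429 — 6 statements merged into one kernel-verified Lean document; each statement's English description precedes it below -/
import Mathlib

section
/- Let (μ_j)_{j≥1} be a nondecreasing sequence of positive real numbers with μ_j → ∞, and let (x_j)_{j≥1} be a sequence of real numbers such that Σ_{j=1}^∞ x_j² < ∞ and Σ_{j=1}^∞ μ_j² x_j² < ∞. Set B = Σ_{j=1}^∞ x_j² and A = Σ_{j=1}^∞ μ_j² x_j², and assume B > 0. Fix an index m₁ ≥ 1 with x_{m₁} ≠ 0, and assume Σ_{j=1}^∞ μ_j x_j² < √(A·B). Then Σ_{j=1}^∞ μ_j x_j² ≤ (A + μ_{m₁} μ_{m₁+1} B)/(μ_{m₁} + μ_{m₁+1}). -/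
/-- Theorem 2.1 (Chen–Zheng–Yang): the ℓ²-sequence inequality. -/
theorem stmt0 (mu x : ℕ → ℝ)
    (hmu_pos : ∀ j, 1 ≤ j → 0 < mu j)
    (hmu_mono : ∀ j, 1 ≤ j → mu j ≤ mu (j + 1))
    (hmu_tendsto : Filter.Tendsto mu Filter.atTop Filter.atTop)
    (hB_sum : Summable (fun j : ℕ => x (j + 1) ^ 2))
    (hA_sum : Summable (fun j : ℕ => mu (j + 1) ^ 2 * x (j + 1) ^ 2))
    (B A : ℝ)
    (hB : B = ∑' j : ℕ, x (j + 1) ^ 2)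
    (hA : A = ∑' j : ℕ, mu (j + 1) ^ 2 * x (j + 1) ^ 2)
    (hBpos : 0 < B)
    (m₁ : ℕ) (hm₁ : 1 ≤ m₁) (hxm₁ : x m₁ ≠ 0)
    (hlt : (∑' j : ℕ, mu (j + 1) * x (j + 1) ^ 2) < Real.sqrt (A * B)) :
    (∑' j : ℕ, mu (j + 1) * x (j + 1) ^ 2)
      ≤ (A + mu m₁ * mu (m₁ + 1) * B) / (mu m₁ + mu (m₁ + 1)) := by
  set a := mu m₁ with ha
  set b := mu (m₁ + 1) with hb
  have hmono : ∀ i k : ℕ, 1 ≤ i → i ≤ k → mu i ≤ mu k := by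
    intro i k hi hik
    induction k with
    | zero => omega
    | succ n ih =>
      rcases Nat.lt_or_ge i (n + 1) with h | h
      · exact le_trans (ih (by omega)) (hmu_mono n (by omega))
      · have : i = n + 1 := by omega
        rw [this]
  have hapos : 0 < a := hmu_pos m₁ hm₁
  have hbpos : 0 < b := hmu_pos (m₁ + 1) (by omega)
  have habpos : 0 < a + b := by linarith
  -- summability of the middle sum
  have hS_sum : Summable (fun j : ℕ => mu (j + 1) * x (j + 1) ^ 2) := by
    apply Summable.of_nonneg_of_le
      (fun j => mul_nonneg (hmu_pos _ (by omega)).le (sq_nonneg _))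
      (fun j => ?_) (hA_sum.add hB_sum)
    have hx2 : (0:ℝ) ≤ x (j + 1) ^ 2 := sq_nonneg _
    have hmu : 0 < mu (j + 1) := hmu_pos _ (by omega)
    nlinarith [sq_nonneg (mu (j + 1) - 1)]
  set S := ∑' j : ℕ, mu (j + 1) * x (j + 1) ^ 2 with hS
  -- key: termwise nonnegativity
  have hkey : (0:ℝ) ≤ A - (a + b) * S + a * b * B := by
    have hterm : ∀ j : ℕ, 0 ≤ (mu (j + 1) - a) * (mu (j + 1) - b) * x (j + 1) ^ 2 := by
      intro j
      have hx2 : (0:ℝ) ≤ x (j + 1) ^ 2 := sq_nonneg _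
      rcases Nat.lt_or_ge (j + 1) (m₁ + 1) with h | h
      · have h1 : mu (j + 1) ≤ a := hmono (j + 1) m₁ (by omega) (by omega)
        have h2 : a ≤ b := hmu_mono m₁ hm₁
        have : (0:ℝ) ≤ (mu (j + 1) - a) * (mu (j + 1) - b) := by nlinarith
        exact mul_nonneg this hx2
      · have h1 : b ≤ mu (j + 1) := hmono (m₁ + 1) (j + 1) (by omega) h
        have h2 : a ≤ b := hmu_mono m₁ hm₁
        exact mul_nonneg (mul_nonneg (by linarith) (by linarith)) hx2
    have hsum2 : Summable (fun j : ℕ =>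
        (mu (j + 1) - a) * (mu (j + 1) - b) * x (j + 1) ^ 2) := by
      have : (fun j : ℕ => (mu (j + 1) - a) * (mu (j + 1) - b) * x (j + 1) ^ 2)
          = fun j : ℕ => mu (j + 1) ^ 2 * x (j + 1) ^ 2
              - (a + b) * (mu (j + 1) * x (j + 1) ^ 2) + a * b * x (j + 1) ^ 2 := by
        funext j; ring
      rw [this]
      exact (hA_sum.sub (hS_sum.mul_left _)).add (hB_sum.mul_left _)
    have h0 : (0:ℝ) ≤ ∑' j : ℕ, (mu (j + 1) - a) * (mu (j + 1) - b) * x (j + 1) ^ 2 :=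
      tsum_nonneg hterm
    have heq : (∑' j : ℕ, (mu (j + 1) - a) * (mu (j + 1) - b) * x (j + 1) ^ 2)
        = A - (a + b) * S + a * b * B := by
      have : (fun j : ℕ => (mu (j + 1) - a) * (mu (j + 1) - b) * x (j + 1) ^ 2)
          = fun j : ℕ => mu (j + 1) ^ 2 * x (j + 1) ^ 2
              - (a + b) * (mu (j + 1) * x (j + 1) ^ 2) + a * b * x (j + 1) ^ 2 := by
        funext j; ring
      rw [this, Summable.tsum_add (hA_sum.sub (hS_sum.mul_left _)) (hB_sum.mul_left _),
        Summable.tsum_sub hA_sum (hS_sum.mul_left _), tsum_mul_left, tsum_mul_left,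
        ← hA, ← hB, ← hS]
    linarith [heq ▸ h0]
  rw [le_div_iff₀ habpos]
  linarith
end

section
/- Let n ≥ 1 be an integer, k ≥ 1 an integer, and let μ_1 ≤ μ_2 ≤ ⋯ ≤ μ_{k+1} be positive real numbers satisfying Σ_{i=1}^k (μ_{k+1} − μ_i)² ≤ (4/n) Σ_{i=1}^k μ_i (μ_{k+1} − μ_i). For m = k and m = k+1 define Λ_m = (1/m) Σ_{i=1}^m μ_i, T_m = (1/m) Σ_{i=1}^m μ_i², and F_m = (1 + 2/n) Λ_m² − T_m. Then F_{k+1} ≤ C(n,k) ((k+1)/k)^{4/n} F_k, where C(n,k) = 1 − (1/(3n)) (k/(k+1))^{4/n} (1 + 2/n)(1 + 4/n)/(k+1)³; moreover C(n,k) < 1. -/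
/-!
Write `e = 2/n`, `F = (1 + e) Λ_k² - T_k` and `w = μ_{k+1} - (1 + e) Λ_k`. Dividing Yang's
inequality by `k` turns it into `e (1 + e) Λ_k² + w² ≤ (1 + 2e) F`; in particular `F ≥ 0`.
Expanding, `(k + 1)² F_{k+1} = k (k + 1) F + Q(Λ_k, w)` for a quadratic form `Q`, and a sum of
squares shows `Q ≤ λ (e (1 + e) Λ_k² + w²)` with `λ = k + 1 + e + e (1 + e) / (2k + 1)`. So
`(k + 1)² F_{k+1} ≤ (k (k + 1) + (1 + 2e) λ) F`, and the theorem follows once this coefficient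
plus `e (1 + e) (1 + 2e) / (6 (k + 1))` is at most `(k + 1)² ((k + 1)/k)^{2e}`. With
`u = 1/(k + 1)` we have `((k + 1)/k)^{2e} = exp (-2e log (1 - u))`; bounding `-log (1 - u)` below
by four terms of its series and `exp` by its cubic Taylor polynomial leaves a polynomial
inequality in `0 ≤ u ≤ 1/2` and `e ≥ 0`.
-/

open Real Finset

def yangF (e L T : ℝ) : ℝ := (1 + e) * L ^ 2 - T

noncomputable def recursionCoeff (K e : ℝ) : ℝ :=
  K * (K + 1) + (1 + 2 * e) * (K + 1 + e + (1 + e) * e / (2 * K + 1))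

lemma sum_range_pow_div_le_neg_log_one_sub {u : ℝ} (h0 : 0 ≤ u) (h1 : u < 1) (N : ℕ) :
    ∑ i ∈ range N, u ^ (i + 1) / (i + 1) ≤ -log (1 - u) :=
  sum_le_hasSum (range N) (fun i _ => by positivity)
    (hasSum_pow_div_log_of_abs_lt_one (by rwa [abs_of_nonneg h0]))

lemma cubic_taylor_le_exp {y : ℝ} (hy : 0 ≤ y) : 1 + y + y ^ 2 / 2 + y ^ 3 / 6 ≤ exp y := by
  have := sum_le_exp_of_nonneg hy 4
  norm_num [sum_range_succ, Nat.factorial] at this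
  linarith

lemma recursionCoeff_poly_le_cubic_taylor {u e M : ℝ} (h0 : 0 ≤ u) (h1 : u ≤ 1 / 2)
    (he : 0 ≤ e) (hM : u + u ^ 2 / 2 + u ^ 3 / 3 + u ^ 4 / 4 ≤ M) :
    1 + 2 * e * u + e * (1 + 2 * e) * u ^ 2
        + e * (1 + e) * (1 + 2 * e) * (u ^ 3 / (2 - u) + u ^ 3 / 6)
      ≤ 1 + 2 * e * M + (2 * e * M) ^ 2 / 2 + (2 * e * M) ^ 3 / 6 := by
  have hG : u ^ 3 / (2 - u) ≤ u ^ 3 / 2 + u ^ 4 / 3 := by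
    rw [div_le_iff₀ (by linarith)]
    nlinarith [pow_nonneg h0 3, pow_nonneg h0 4]
  have hM2 : u ^ 2 + u ^ 3 + u ^ 4 / 2 ≤ M ^ 2 := by
    nlinarith [pow_nonneg h0 3, pow_nonneg h0 4, pow_nonneg h0 5]
  have hM3 : u ^ 3 + u ^ 4 / 2 ≤ M ^ 3 := by
    nlinarith [pow_nonneg h0 3, pow_nonneg h0 4, pow_nonneg h0 5]
  have he1 : 0 ≤ e * (1 + e) * (1 + 2 * e) := by positivity
  nlinarith [mul_le_mul_of_nonneg_left hG he1, mul_le_mul_of_nonneg_left hM2 (sq_nonneg e),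
    mul_le_mul_of_nonneg_left hM3 (pow_nonneg he 3), mul_nonneg he (pow_nonneg h0 4)]

lemma recursionCoeff_add_le_sq_mul_rpow {K e : ℝ} (hK : 1 ≤ K) (he : 0 ≤ e) :
    recursionCoeff K e + e * (1 + e) * (1 + 2 * e) / (6 * (K + 1))
      ≤ (K + 1) ^ 2 * ((K + 1) / K) ^ (2 * e) := by
  have hK0 : 0 < K := by linarith
  set u := 1 / (K + 1) with hu
  have hu0 : 0 ≤ u := by positivity
  have hu1 : u ≤ 1 / 2 := by rw [hu]; gcongr; linarith
  have hlog : log ((K + 1) / K) = -log (1 - u) := by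
    rw [← log_inv, show 1 - u = K / (K + 1) by rw [hu]; field_simp; ring, inv_div]
  have hM := sum_range_pow_div_le_neg_log_one_sub hu0 (by linarith) 4
  norm_num [sum_range_succ, ← hlog] at hM
  have hexp := cubic_taylor_le_exp (show 0 ≤ 2 * e * log ((K + 1) / K) by
    have : 0 ≤ log ((K + 1) / K) := by
      linarith [pow_nonneg hu0 2, pow_nonneg hu0 3, pow_nonneg hu0 4]
    positivity)
  have hcoeff : recursionCoeff K e + e * (1 + e) * (1 + 2 * e) / (6 * (K + 1))
      = (K + 1) ^ 2 * (1 + 2 * e * u + e * (1 + 2 * e) * u ^ 2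
        + e * (1 + e) * (1 + 2 * e) * (u ^ 3 / (2 - u) + u ^ 3 / 6)) := by
    rw [recursionCoeff, hu, show 2 - 1 / (K + 1) = (2 * K + 1) / (K + 1) by field_simp; ring]
    field_simp
    ring
  rw [hcoeff, rpow_def_of_pos (by positivity), mul_comm _ (2 * e)]
  gcongr
  exact (recursionCoeff_poly_le_cubic_taylor hu0 hu1 he hM).trans hexp

section Yang

variable {e L T m : ℝ}

lemma yang_quadratic_le (hyang : m ^ 2 - 2 * (1 + e) * L * m + (1 + 2 * e) * T ≤ 0) :
    e * (1 + e) * L ^ 2 + (m - (1 + e) * L) ^ 2 ≤ (1 + 2 * e) * yangF e L T := by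
  unfold yangF
  linear_combination hyang

lemma yangF_nonneg (he : 0 ≤ e) (hyang : m ^ 2 - 2 * (1 + e) * L * m + (1 + 2 * e) * T ≤ 0) :
    0 ≤ yangF e L T := by
  have : 0 ≤ (1 + 2 * e) * yangF e L T := le_trans (by positivity) (yang_quadratic_le hyang)
  exact nonneg_of_mul_nonneg_right this (by positivity)

lemma sq_mul_yangF_succ_le {K : ℝ} (hK : 0 ≤ K) (he : 0 ≤ e)
    (hyang : m ^ 2 - 2 * (1 + e) * L * m + (1 + 2 * e) * T ≤ 0) :
    (K + 1) ^ 2 * yangF e (1 / (K + 1) * (K * L + m)) (1 / (K + 1) * (K * T + m ^ 2))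
      ≤ recursionCoeff K e * yangF e L T := by
  set w := m - (1 + e) * L with hw
  set lam := K + 1 + e + (1 + e) * e / (2 * K + 1) with hlam
  set Q := e * (1 + e) * (1 + e + K) * L ^ 2 + 2 * e * (1 + e) * L * w - (K - e) * w ^ 2 with hQ
  have hQ_le : Q ≤ lam * (e * (1 + e) * L ^ 2 + w ^ 2) := by
    have hsos : lam * (e * (1 + e) * L ^ 2 + w ^ 2) - Q
        = ((e * (1 + e) * L - (2 * K + 1) * w) ^ 2 + e * (1 + e) * w ^ 2) / (2 * K + 1) := by
      rw [hlam, hQ]; field_simp; ring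
    have : 0 ≤ e * (1 + e) := by positivity
    have : 0 ≤ ((e * (1 + e) * L - (2 * K + 1) * w) ^ 2 + e * (1 + e) * w ^ 2) / (2 * K + 1) := by
      positivity
    linarith
  have hlam0 : 0 ≤ lam := by positivity
  calc (K + 1) ^ 2 * yangF e (1 / (K + 1) * (K * L + m)) (1 / (K + 1) * (K * T + m ^ 2))
      = K * (K + 1) * yangF e L T + Q := by
        rw [yangF, yangF, hQ, hw]; field_simp; ring
    _ ≤ K * (K + 1) * yangF e L T + lam * ((1 + 2 * e) * yangF e L T) := by
        gcongr
        exact hQ_le.trans (mul_le_mul_of_nonneg_left (yang_quadratic_le hyang) hlam0)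
    _ = recursionCoeff K e * yangF e L T := by rw [recursionCoeff]; ring

end Yang

lemma yangF_succ_le {K e S S2 m : ℝ} (hK : 1 ≤ K) (he : 0 ≤ e)
    (hyang : K * m ^ 2 - 2 * m * S + S2 ≤ 2 * e * (m * S - S2)) :
    yangF e (1 / (K + 1) * (S + m)) (1 / (K + 1) * (S2 + m ^ 2))
      ≤ (1 - e / 6 * (K / (K + 1)) ^ (2 * e) * ((1 + e) * (1 + 2 * e) / (K + 1) ^ 3))
        * ((K + 1) / K) ^ (2 * e) * yangF e (1 / K * S) (1 / K * S2) := by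
  have hK0 : 0 < K := by linarith
  set L := 1 / K * S with hL
  set T := 1 / K * S2 with hT
  have hS : S = K * L := by rw [hL]; field_simp
  have hS2 : S2 = K * T := by rw [hT]; field_simp
  have hyang' : m ^ 2 - 2 * (1 + e) * L * m + (1 + 2 * e) * T ≤ 0 := by
    rw [hS, hS2] at hyang
    have : K * (m ^ 2 - 2 * (1 + e) * L * m + (1 + 2 * e) * T) ≤ 0 := by
      linear_combination hyang
    exact nonpos_of_mul_nonpos_right this hK0
  set R := ((K + 1) / K) ^ (2 * e)
  have hRR : (K / (K + 1)) ^ (2 * e) * R = 1 := by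
    rw [← mul_rpow (by positivity) (by positivity), div_mul_div_cancel₀ (by positivity),
      div_self (by positivity), one_rpow]
  have hC : (1 - e / 6 * (K / (K + 1)) ^ (2 * e) * ((1 + e) * (1 + 2 * e) / (K + 1) ^ 3)) * R
      = ((K + 1) ^ 2 * R - e * (1 + e) * (1 + 2 * e) / (6 * (K + 1))) / (K + 1) ^ 2 := by
    rw [show ∀ x : ℝ, (1 - e / 6 * x * ((1 + e) * (1 + 2 * e) / (K + 1) ^ 3)) * R
      = R - e / 6 * (x * R) * ((1 + e) * (1 + 2 * e) / (K + 1) ^ 3) from fun x => by ring, hRR]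
    field_simp
  rw [hS, hS2, hC]
  calc _ = (K + 1) ^ 2 * yangF e (1 / (K + 1) * (K * L + m)) (1 / (K + 1) * (K * T + m ^ 2))
        / (K + 1) ^ 2 := by field_simp
    _ ≤ recursionCoeff K e * yangF e L T / (K + 1) ^ 2 :=
        div_le_div_of_nonneg_right (sq_mul_yangF_succ_le hK0.le he hyang') (by positivity)
    _ ≤ _ := by
        rw [div_mul_eq_mul_div]
        have := yangF_nonneg he hyang'
        gcongr
        linarith [recursionCoeff_add_le_sq_mul_rpow hK he]

theorem stmt1_general (n k : ℕ) (hn : 1 ≤ n) (hk : 1 ≤ k) (mu : ℕ → ℝ)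
    (hyang : ∑ i ∈ Finset.Icc 1 k, (mu (k + 1) - mu i) ^ 2
      ≤ (4 / (n : ℝ)) * ∑ i ∈ Finset.Icc 1 k, mu i * (mu (k + 1) - mu i)) :
    (1 + 2 / (n : ℝ)) * ((1 / ((k : ℝ) + 1)) * ∑ i ∈ Finset.Icc 1 (k + 1), mu i) ^ 2
        - (1 / ((k : ℝ) + 1)) * ∑ i ∈ Finset.Icc 1 (k + 1), mu i ^ 2
      ≤ (1 - (1 / (3 * (n : ℝ))) * ((k : ℝ) / ((k : ℝ) + 1)) ^ ((4 : ℝ) / (n : ℝ)) *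
            ((1 + 2 / (n : ℝ)) * (1 + 4 / (n : ℝ)) / ((k : ℝ) + 1) ^ 3)) *
          (((k : ℝ) + 1) / (k : ℝ)) ^ ((4 : ℝ) / (n : ℝ)) *
          ((1 + 2 / (n : ℝ)) * ((1 / (k : ℝ)) * ∑ i ∈ Finset.Icc 1 k, mu i) ^ 2
            - (1 / (k : ℝ)) * ∑ i ∈ Finset.Icc 1 k, mu i ^ 2) ∧
    (1 - (1 / (3 * (n : ℝ))) * ((k : ℝ) / ((k : ℝ) + 1)) ^ ((4 : ℝ) / (n : ℝ)) *
        ((1 + 2 / (n : ℝ)) * (1 + 4 / (n : ℝ)) / ((k : ℝ) + 1) ^ 3)) < 1 := by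
  have hn0 : 0 < n := hn
  have hk0 : 0 < k := hk
  refine ⟨?_, sub_lt_self 1 (by positivity)⟩
  set m := mu (k + 1)
  have hsq : ∑ i ∈ Icc 1 k, (m - mu i) ^ 2
      = k * m ^ 2 - 2 * m * ∑ i ∈ Icc 1 k, mu i + ∑ i ∈ Icc 1 k, mu i ^ 2 := by
    simp only [sub_sq, sum_add_distrib, sum_sub_distrib, ← mul_sum, sum_const, nsmul_eq_mul,
      Nat.card_Icc, add_tsub_cancel_right]
  have hcross : ∑ i ∈ Icc 1 k, mu i * (m - mu i)
      = m * ∑ i ∈ Icc 1 k, mu i - ∑ i ∈ Icc 1 k, mu i ^ 2 := by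
    simp only [mul_sub, sum_sub_distrib, ← sum_mul, sq]
    ring
  rw [hsq, hcross, show (4 : ℝ) / n = 2 * (2 / n) by ring] at hyang
  rw [sum_Icc_succ_top (by omega), sum_Icc_succ_top (by omega),
    show (4 : ℝ) / n = 2 * (2 / n) by ring, show 1 / (3 * (n : ℝ)) = 2 / n / 6 by ring]
  exact yangF_succ_le (by exact_mod_cast hk) (by positivity) hyang

/-- The recursion formula of Cheng and Yang. -/
theorem stmt1 (n k : ℕ) (hn : 1 ≤ n) (hk : 1 ≤ k) (mu : ℕ → ℝ)
    (hpos : ∀ i, 1 ≤ i → i ≤ k + 1 → 0 < mu i)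
    (hmono : ∀ i, 1 ≤ i → i ≤ k → mu i ≤ mu (i + 1))
    (hyang : ∑ i ∈ Finset.Icc 1 k, (mu (k + 1) - mu i) ^ 2
      ≤ (4 / (n : ℝ)) * ∑ i ∈ Finset.Icc 1 k, mu i * (mu (k + 1) - mu i)) :
    (1 + 2 / (n : ℝ)) * ((1 / ((k : ℝ) + 1)) * ∑ i ∈ Finset.Icc 1 (k + 1), mu i) ^ 2
        - (1 / ((k : ℝ) + 1)) * ∑ i ∈ Finset.Icc 1 (k + 1), mu i ^ 2
      ≤ (1 - (1 / (3 * (n : ℝ))) * ((k : ℝ) / ((k : ℝ) + 1)) ^ ((4 : ℝ) / (n : ℝ)) *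
            ((1 + 2 / (n : ℝ)) * (1 + 4 / (n : ℝ)) / ((k : ℝ) + 1) ^ 3)) *
          (((k : ℝ) + 1) / (k : ℝ)) ^ ((4 : ℝ) / (n : ℝ)) *
          ((1 + 2 / (n : ℝ)) * ((1 / (k : ℝ)) * ∑ i ∈ Finset.Icc 1 k, mu i) ^ 2
            - (1 / (k : ℝ)) * ∑ i ∈ Finset.Icc 1 k, mu i ^ 2) ∧
    (1 - (1 / (3 * (n : ℝ))) * ((k : ℝ) / ((k : ℝ) + 1)) ^ ((4 : ℝ) / (n : ℝ)) *
        ((1 + 2 / (n : ℝ)) * (1 + 4 / (n : ℝ)) / ((k : ℝ) + 1) ^ 3)) < 1 :=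
  stmt1_general n k hn hk mu hyang
end

section
/- Let n ≥ 1 be an integer, let c be a real number, and let 0 < λ_1 ≤ λ_2 ≤ λ_3 ≤ ⋯ be a nondecreasing sequence of real numbers with λ_i + c > 0 for every i ≥ 1, satisfying for every integer k ≥ 1 the Yang-type inequality Σ_{i=1}^k (λ_{k+1} − λ_i)² ≤ (4/n) Σ_{i=1}^k (λ_{k+1} − λ_i)(λ_i + c). Then for every integer k ≥ 1 one has λ_{k+1} + c ≤ (1 + 4/n)(λ_1 + c) k^{2/n}. -/
/-!
Write `μ i = λ i + c`, `e = 2 / n` and `N k = (1 + e) (∑_{i ≤ k} μ i)² - k ∑_{i ≤ k} μ i²`.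
Yang's inequality at `k` is a quadratic constraint on `μ (k + 1)`; maximising `N (k + 1)` under it
shows `N (k + 1) ≤ ((k + 1) / k) ^ (2 + 2e) N k`, provided `((k + 1) / k) ^ (2 + 2e)` exceeds an
explicit algebraic threshold. That threshold is checked with a second or third order Taylor lower
bound for `(1 + 1 / k) ^ (1 + 2e)`, whichever has a remainder of the right sign. Telescoping from
`N 1 = e μ 1²` gives `N k ≤ e μ 1² k ^ (2 + 2e)`, and Yang's inequality at `k` together with
Cauchy–Schwarz turns this into `μ (k + 1) ≤ (1 + 2e) μ 1 k ^ e`.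
-/

open Finset Real

lemma one_add_mul_self_le_rpow_one_add_of_nonpos {q t : ℝ} (hq₁ : -1 ≤ q) (hq₀ : q ≤ 0)
    (ht : 0 ≤ t) : 1 + q * t ≤ (1 + t) ^ q := by
  rcases le_or_gt (1 + q * t) 0 with hneg | hpos
  · exact hneg.trans (by positivity)
  have hle : (1 + t) ^ (-q) ≤ 1 + -q * t :=
    rpow_one_add_le_one_add_mul_self (by linarith) (by linarith) (by linarith)
  rw [show q = -(-q) by ring, rpow_neg (by linarith), le_inv_comm₀ (by simpa) (by positivity),
    inv_eq_one_div, le_div_iff₀ (by simpa)]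
  calc (1 + t) ^ (-q) * (1 + - -q * t) ≤ (1 + -q * t) * (1 + q * t) := by
        simpa using mul_le_mul_of_nonneg_right hle hpos.le
    _ ≤ 1 := by nlinarith [sq_nonneg (q * t)]

lemma le_rpow_one_add_of_hasDerivAt {q : ℝ} (hq : 0 ≤ q) {P Q : ℝ → ℝ}
    (hP : ∀ t, HasDerivAt P (q * Q t) t) (hP₀ : P 0 = 1)
    (hQ : ∀ t, 0 ≤ t → Q t ≤ (1 + t) ^ (q - 1)) {x : ℝ} (hx : 0 ≤ x) :
    P x ≤ (1 + x) ^ q := by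
  have hB : ∀ t, 0 ≤ t → HasDerivAt (fun t => (1 + t) ^ q) (q * (1 + t) ^ (q - 1)) t := by
    intro t ht
    simpa using ((hasDerivAt_id t).const_add 1).rpow_const (p := q) (Or.inl (by positivity))
  refine image_le_of_deriv_right_le_deriv_boundary (a := 0)
    (fun t _ => (hP t).continuousAt.continuousWithinAt) (fun t _ => (hP t).hasDerivWithinAt)
    (by simp [hP₀]) (fun t ht => (hB t ht.1).continuousAt.continuousWithinAt)
    (fun t ht => (hB t ht.1).hasDerivWithinAt)
    (fun t ht => mul_le_mul_of_nonneg_left (hQ t ht.1) hq) ⟨hx, le_rfl⟩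

lemma quadratic_taylor_le_rpow_one_add {p t : ℝ} (hp : 0 ≤ p ∧ p ≤ 1 ∨ 2 ≤ p) (ht : 0 ≤ t) :
    1 + p * t + p * (p - 1) / 2 * t ^ 2 ≤ (1 + t) ^ p := by
  refine le_rpow_one_add_of_hasDerivAt (P := fun s => 1 + p * s + p * (p - 1) / 2 * s ^ 2)
    (Q := fun s => 1 + (p - 1) * s) (by rcases hp with h | h <;> linarith) (fun s => ?_)
    (by simp) (fun s hs => ?_) ht
  · refine ((((hasDerivAt_id' s).const_mul p).const_add 1).add
      ((hasDerivAt_pow 2 s).const_mul (p * (p - 1) / 2))).congr_deriv ?_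
    push_cast; ring
  · rcases hp with ⟨hp₀, hp₁⟩ | hp
    · exact one_add_mul_self_le_rpow_one_add_of_nonpos (by linarith) (by linarith) hs
    · exact one_add_mul_self_le_rpow_one_add (by linarith) (by linarith)

lemma cubic_taylor_le_rpow_one_add {p t : ℝ} (hp : 1 ≤ p ∧ p ≤ 2 ∨ 3 ≤ p) (ht : 0 ≤ t) :
    1 + p * t + p * (p - 1) / 2 * t ^ 2 + p * (p - 1) * (p - 2) / 6 * t ^ 3
      ≤ (1 + t) ^ p := by
  refine le_rpow_one_add_of_hasDerivAt
    (P := fun s => 1 + p * s + p * (p - 1) / 2 * s ^ 2 + p * (p - 1) * (p - 2) / 6 * s ^ 3)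
    (Q := fun s => 1 + (p - 1) * s + (p - 1) * (p - 1 - 1) / 2 * s ^ 2)
    (by rcases hp with h | h <;> linarith) (fun s => ?_) (by simp)
    (fun s hs => quadratic_taylor_le_rpow_one_add ?_ hs) ht
  · refine (((((hasDerivAt_id' s).const_mul p).const_add 1).add
      ((hasDerivAt_pow 2 s).const_mul (p * (p - 1) / 2))).add
      ((hasDerivAt_pow 3 s).const_mul (p * (p - 1) * (p - 2) / 6))).congr_deriv ?_
    push_cast; ring
  · rcases hp with h | h
    · exact Or.inl ⟨by linarith, by linarith⟩
    · exact Or.inr (by linarith)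

section GrowthCondition

variable {e j T : ℝ}

lemma growth_condition_of_cubic (he : 0 ≤ e) (hj : 1 ≤ j)
    (hT : j ^ 3 + (1 + 2 * e) * j ^ 2 + (1 + 2 * e) * e * j + (1 + 2 * e) * e * (2 * e - 1) / 3
      ≤ j ^ 3 * T) :
    (1 + 2 * e) * ((j + 1 + e) * (2 * j + 1) + e * (1 + e))
      ≤ (2 * j + 1) * (j * (j + 1) * T - j * (j + 1)) := by
  refine le_of_mul_le_mul_left ?_ (by positivity : 0 < j ^ 2)
  nlinarith [mul_le_mul_of_nonneg_left hT (by positivity : 0 ≤ (j + 1) * (2 * j + 1)),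
    mul_nonneg he (sub_nonneg.2 hj), mul_nonneg (mul_nonneg he he) (sub_nonneg.2 hj)]

lemma growth_condition_of_quadratic (he : 0 ≤ e) (he₁ : e ≤ 1) (hj : 0 < j)
    (hT : j ^ 2 + (1 + 2 * e) * j + (1 + 2 * e) * e ≤ j ^ 2 * T) :
    (1 + 2 * e) * ((j + 1 + e) * (2 * j + 1) + e * (1 + e))
      ≤ (2 * j + 1) * (j * (j + 1) * T - j * (j + 1)) := by
  refine le_of_mul_le_mul_left ?_ hj
  have hslack : 0 ≤ j * (1 + 2 * e) * e * (j * (1 - e) + 1) :=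
    mul_nonneg (by positivity) (by nlinarith)
  nlinarith [mul_le_mul_of_nonneg_left hT (by positivity : 0 ≤ (j + 1) * (2 * j + 1))]

lemma growth_condition_rpow (he : 0 < e) (hj : 1 ≤ j) :
    (1 + 2 * e) * ((j + 1 + e) * (2 * j + 1) + e * (1 + e))
      ≤ (2 * j + 1) * (j ^ 2 * ((j + 1) / j) ^ (2 + 2 * e) - j * (j + 1)) := by
  have hj₀ : 0 < j := by linarith
  have hsplit : j ^ 2 * ((j + 1) / j) ^ (2 + 2 * e)
      = j * (j + 1) * (1 + 1 / j) ^ (1 + 2 * e) := by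
    rw [show 2 + 2 * e = 1 + (1 + 2 * e) by ring, rpow_add (by positivity), rpow_one,
      show (j + 1) / j = 1 + 1 / j by field_simp]
    field_simp
  have hcubic (hp : 1 + 2 * e ≤ 2 ∨ 3 ≤ 1 + 2 * e) :
      j ^ 3 + (1 + 2 * e) * j ^ 2 + (1 + 2 * e) * e * j + (1 + 2 * e) * e * (2 * e - 1) / 3
        ≤ j ^ 3 * (1 + 1 / j) ^ (1 + 2 * e) := by
    refine le_trans (le_of_eq ?_) (mul_le_mul_of_nonneg_left
      (cubic_taylor_le_rpow_one_add (t := 1 / j) (hp.imp (⟨by linarith, ·⟩) id) (by positivity))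
      (pow_nonneg hj₀.le 3))
    field_simp
    ring
  rw [hsplit]
  rcases le_or_gt e (1 / 2) with he₁ | he₁
  · exact growth_condition_of_cubic he.le hj (hcubic (Or.inl (by linarith)))
  rcases le_or_gt e 1 with he₂ | he₂
  · refine growth_condition_of_quadratic he.le he₂ hj₀ (le_trans (le_of_eq ?_)
      (mul_le_mul_of_nonneg_left (quadratic_taylor_le_rpow_one_add (t := 1 / j)
        (Or.inr (by linarith)) (by positivity)) (sq_nonneg j)))
    field_simp
    ring
  · exact growth_condition_of_cubic he.le hj (hcubic (Or.inr (by linarith)))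

end GrowthCondition

lemma gap_succ_le_of_growth_condition {e j L S x Y : ℝ} (he : 0 ≤ e) (hj : 0 < j)
    (hyang : (j * x - (1 + e) * L) ^ 2 ≤ (1 + e) ^ 2 * L ^ 2 - (1 + 2 * e) * j * S)
    (hY : (1 + 2 * e) * ((j + 1 + e) * (2 * j + 1) + e * (1 + e))
      ≤ (2 * j + 1) * (j ^ 2 * Y - j * (j + 1))) :
    (1 + e) * (L + x) ^ 2 - (j + 1) * (S + x ^ 2) ≤ Y * ((1 + e) * L ^ 2 - j * S) := by
  set N := (1 + e) * L ^ 2 - j * S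
  set w := j * x - (1 + e) * L
  set D := (j ^ 2 * Y - j * (j + 1)) / (1 + 2 * e) - (j + 1 + e)
  have hYD : j ^ 2 * Y = j * (j + 1) + (1 + 2 * e) * (j + 1 + e + D) := by
    simp only [D]; field_simp; ring
  have hD : e * (1 + e) ≤ (2 * j + 1) * D := by
    rw [hYD] at hY
    nlinarith
  have hD₀ : 0 ≤ D := by nlinarith
  have hslack : 0 ≤ (1 + 2 * e) * N - (w ^ 2 + e * (1 + e) * L ^ 2) := by
    simp only [N, w] at hyang ⊢; nlinarith
  -- a quadratic form in `(w, L)`, positive semidefinite by the discriminant bound `hD`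
  have hform :
      0 ≤ (2 * j + 1 + D) * w ^ 2 - 2 * (1 + e) * e * L * w + e * (1 + e) * L ^ 2 * D := by
    refine nonneg_of_mul_nonneg_right (a := 2 * j + 1 + D) ?_ (by linarith)
    have : 0 ≤ e * (1 + e) * L ^ 2 * ((2 * j + 1 + D) * D - e * (1 + e)) :=
      mul_nonneg (by positivity) (by nlinarith)
    nlinarith [sq_nonneg ((2 * j + 1 + D) * w - (1 + e) * e * L)]
  have hid : j ^ 2 * (Y * N - ((1 + e) * (L + x) ^ 2 - (j + 1) * (S + x ^ 2)))
      = (j + 1 + e + D) * ((1 + 2 * e) * N - (w ^ 2 + e * (1 + e) * L ^ 2))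
        + ((2 * j + 1 + D) * w ^ 2 - 2 * (1 + e) * e * L * w + e * (1 + e) * L ^ 2 * D) := by
    simp only [N, w]
    linear_combination ((1 + e) * L ^ 2 - j * S) * hYD
  have hprod : 0 ≤ j ^ 2 * (Y * N - ((1 + e) * (L + x) ^ 2 - (j + 1) * (S + x ^ 2))) := by
    rw [hid]; exact add_nonneg (mul_nonneg (by linarith) hslack) hform
  exact sub_nonneg.1 (nonneg_of_mul_nonneg_right hprod (by positivity))

lemma sq_sub_le_of_yang {ι : Type*} (s : Finset ι) (μ : ι → ℝ) {e x : ℝ}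
    (h : ∑ i ∈ s, (x - μ i) ^ 2 ≤ 2 * e * ∑ i ∈ s, (x - μ i) * μ i) :
    (#s * x - (1 + e) * ∑ i ∈ s, μ i) ^ 2
      ≤ (1 + e) ^ 2 * (∑ i ∈ s, μ i) ^ 2 - (1 + 2 * e) * #s * ∑ i ∈ s, μ i ^ 2 := by
  have hsq : ∑ i ∈ s, (x - μ i) ^ 2 = #s * x ^ 2 - 2 * x * ∑ i ∈ s, μ i + ∑ i ∈ s, μ i ^ 2 := by
    simp only [sub_sq, sum_add_distrib, sum_sub_distrib, sum_const, nsmul_eq_mul, mul_sum]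
  have hmul : ∑ i ∈ s, (x - μ i) * μ i = x * ∑ i ∈ s, μ i - ∑ i ∈ s, μ i ^ 2 := by
    simp only [sub_mul, sum_sub_distrib, mul_sum, sq]
  rw [hsq, hmul] at h
  nlinarith [mul_le_mul_of_nonneg_left h (Nat.cast_nonneg (α := ℝ) #s)]

/-- `k ^ 2 F_k`, for Cheng–Yang's `F_k = (1 + 2 / n) Λ_k ^ 2 - T_k` when `e = 2 / n`. -/
def chengYangGap (e : ℝ) (μ : ℕ → ℝ) (k : ℕ) : ℝ :=
  (1 + e) * (∑ i ∈ Icc 1 k, μ i) ^ 2 - k * ∑ i ∈ Icc 1 k, μ i ^ 2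

section ChengYangGap

variable {e : ℝ} {μ : ℕ → ℝ}

lemma chengYangGap_one : chengYangGap e μ 1 = e * μ 1 ^ 2 := by
  simp [chengYangGap]; ring

lemma chengYangGap_succ_le (he : 0 < e) {k : ℕ} (hk : 1 ≤ k)
    (hyang : ((k : ℝ) * μ (k + 1) - (1 + e) * ∑ i ∈ Icc 1 k, μ i) ^ 2
      ≤ (1 + e) ^ 2 * (∑ i ∈ Icc 1 k, μ i) ^ 2 - (1 + 2 * e) * k * ∑ i ∈ Icc 1 k, μ i ^ 2) :
    chengYangGap e μ (k + 1) ≤ (((k : ℝ) + 1) / k) ^ (2 + 2 * e) * chengYangGap e μ k := by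
  have hk' : (1 : ℝ) ≤ k := by exact_mod_cast hk
  simp only [chengYangGap, sum_Icc_succ_top (by omega : 1 ≤ k + 1), Nat.cast_succ]
  exact gap_succ_le_of_growth_condition he.le (by linarith) hyang (growth_condition_rpow he hk')

lemma chengYangGap_le (he : 0 < e)
    (hyang : ∀ k : ℕ, 1 ≤ k → ((k : ℝ) * μ (k + 1) - (1 + e) * ∑ i ∈ Icc 1 k, μ i) ^ 2
      ≤ (1 + e) ^ 2 * (∑ i ∈ Icc 1 k, μ i) ^ 2 - (1 + 2 * e) * k * ∑ i ∈ Icc 1 k, μ i ^ 2)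
    {k : ℕ} (hk : 1 ≤ k) : chengYangGap e μ k ≤ e * μ 1 ^ 2 * (k : ℝ) ^ (2 + 2 * e) := by
  induction k, hk using Nat.le_induction with
  | base => simp [chengYangGap_one]
  | succ k hk ih =>
    have hk₀ : (0 : ℝ) < k := by exact_mod_cast hk
    calc chengYangGap e μ (k + 1)
        ≤ (((k : ℝ) + 1) / k) ^ (2 + 2 * e) * chengYangGap e μ k :=
          chengYangGap_succ_le he hk (hyang k hk)
      _ ≤ (((k : ℝ) + 1) / k) ^ (2 + 2 * e) * (e * μ 1 ^ 2 * (k : ℝ) ^ (2 + 2 * e)) :=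
          mul_le_mul_of_nonneg_left ih (by positivity)
      _ = e * μ 1 ^ 2 * ((k + 1 : ℕ) : ℝ) ^ (2 + 2 * e) := by
          rw [div_rpow (by positivity) hk₀.le, Nat.cast_succ]
          field_simp

end ChengYangGap

lemma le_mul_rpow_of_gap_le {e k x L S m : ℝ} (he : 0 < e) (hk : 0 < k) (hm : 0 ≤ m)
    (hyang : (k * x - (1 + e) * L) ^ 2 ≤ (1 + e) ^ 2 * L ^ 2 - (1 + 2 * e) * k * S)
    (hgap : (1 + e) * L ^ 2 - k * S ≤ e * m ^ 2 * k ^ (2 + 2 * e)) :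
    x ≤ (1 + 2 * e) * m * k ^ e := by
  -- Cauchy–Schwarz for `k x = w + (1 + e) L`, weighted by `w² + e (1 + e) L² ≤ (1 + 2e) N`
  have hcs : e * (k * x) ^ 2 ≤ (1 + 2 * e) ^ 2 * ((1 + e) * L ^ 2 - k * S) := by
    nlinarith [mul_nonneg (by linarith : (0 : ℝ) ≤ 1 + e)
      (sq_nonneg (k * x - (1 + e) * L - e * L))]
  have hsq : (k * x) ^ 2 ≤ ((1 + 2 * e) * m * k ^ (1 + e)) ^ 2 := by
    have : (k * x) ^ 2 ≤ (1 + 2 * e) ^ 2 * (m ^ 2 * k ^ (2 + 2 * e)) := by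
      refine le_of_mul_le_mul_left ?_ he
      nlinarith [mul_le_mul_of_nonneg_left hgap (sq_nonneg (1 + 2 * e))]
    rw [show (2 : ℝ) + 2 * e = (1 + e) * 2 by ring, rpow_mul hk.le, rpow_two] at this
    simpa [mul_pow, mul_assoc] using this
  have hkx := (abs_le_of_sq_le_sq' hsq (by positivity)).2
  rw [rpow_add hk, rpow_one] at hkx
  refine le_of_mul_le_mul_left ?_ hk
  linarith

theorem stmt2_general (n : ℕ) (hn : 1 ≤ n) (c : ℝ) (lam : ℕ → ℝ)
    (hshift : ∀ i, 1 ≤ i → 0 < lam i + c)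
    (hyang : ∀ k : ℕ, 1 ≤ k →
      ∑ i ∈ Finset.Icc 1 k, (lam (k + 1) - lam i) ^ 2
        ≤ (4 / (n : ℝ)) * ∑ i ∈ Finset.Icc 1 k, (lam (k + 1) - lam i) * (lam i + c)) :
    ∀ k : ℕ, 1 ≤ k →
      lam (k + 1) + c ≤ (1 + 4 / (n : ℝ)) * (lam 1 + c) * (k : ℝ) ^ ((2 : ℝ) / (n : ℝ)) := by
  intro k hk
  have he : (0 : ℝ) < 2 / n := div_pos two_pos (by exact_mod_cast hn)
  set μ : ℕ → ℝ := fun i => lam i + c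
  have hquad (k : ℕ) (hk : 1 ≤ k) :
      ((k : ℝ) * μ (k + 1) - (1 + 2 / n) * ∑ i ∈ Icc 1 k, μ i) ^ 2
        ≤ (1 + 2 / n) ^ 2 * (∑ i ∈ Icc 1 k, μ i) ^ 2
          - (1 + 2 * (2 / n)) * k * ∑ i ∈ Icc 1 k, μ i ^ 2 := by
    have h := sq_sub_le_of_yang (Icc 1 k) μ (x := μ (k + 1)) (e := 2 / n) (by
      convert hyang k hk using 3 with i
      · simp [μ]
      · ring
      · simp [μ])
    simpa using h
  convert le_mul_rpow_of_gap_le he (by exact_mod_cast hk) (hshift 1 le_rfl).le (hquad k hk)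
    (chengYangGap_le he hquad hk) using 2
  ring

/-- Shifted abstract form of the Cheng–Yang eigenvalue bound. -/
theorem stmt2 (n : ℕ) (hn : 1 ≤ n) (c : ℝ) (lam : ℕ → ℝ)
    (hpos : 0 < lam 1)
    (hmono : ∀ i, 1 ≤ i → lam i ≤ lam (i + 1))
    (hshift : ∀ i, 1 ≤ i → 0 < lam i + c)
    (hyang : ∀ k : ℕ, 1 ≤ k →
      ∑ i ∈ Finset.Icc 1 k, (lam (k + 1) - lam i) ^ 2
        ≤ (4 / (n : ℝ)) * ∑ i ∈ Finset.Icc 1 k, (lam (k + 1) - lam i) * (lam i + c)) :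
    ∀ k : ℕ, 1 ≤ k →
      lam (k + 1) + c ≤ (1 + 4 / (n : ℝ)) * (lam 1 + c) * (k : ℝ) ^ ((2 : ℝ) / (n : ℝ)) :=
  stmt2_general n hn c lam hshift hyang
end

section
/- Let n ≥ 1 be an integer, let Ω ⊆ ℝⁿ be a nonempty bounded open set with smooth boundary, let f(x) = |x|²/4, and let u be a real-valued function smooth on a neighborhood of the closure of Ω that vanishes on ∂Ω. Then Σ_{α=1}^n ∫_Ω (2 ∂_α u − (x_α/2) u)² e^{−f(x)} dx = 4 ∫_Ω |∇u|² e^{−f(x)} dx + n ∫_Ω u² e^{−f(x)} dx − (1/4) ∫_Ω |x|² u² e^{−f(x)} dx. -/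
open MeasureTheory Real Filter
open scoped ENNReal RealInnerProductSpace

noncomputable section

/-- The Euclidean Laplacian of `u : ℝⁿ → ℝ`. -/
def eLap {n : ℕ} (u : EuclideanSpace ℝ (Fin n) → ℝ) (x : EuclideanSpace ℝ (Fin n)) : ℝ :=
  ∑ j : Fin n,
    fderiv ℝ (fun y => fderiv ℝ u y (EuclideanSpace.single j 1)) x (EuclideanSpace.single j 1)

/-- The drifting Laplacian `Δ_f u = Δ u - ⟨∇ f, ∇ u⟩`. -/
def driftLap {n : ℕ} (f u : EuclideanSpace ℝ (Fin n) → ℝ) (x : EuclideanSpace ℝ (Fin n)) : ℝ :=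
  eLap u x - ⟪gradient f x, gradient u x⟫

/-- The weighted measure `e^{-f} dx` on `Ω`. -/
def wMeasure {n : ℕ} (Ω : Set (EuclideanSpace ℝ (Fin n)))
    (f : EuclideanSpace ℝ (Fin n) → ℝ) : Measure (EuclideanSpace ℝ (Fin n)) :=
  (volume.restrict Ω).withDensity fun x => ENNReal.ofReal (Real.exp (-f x))

/-- `u` is smooth on a neighborhood of the closure of `Ω`. -/
def SmoothNearClosure {n : ℕ} (Ω : Set (EuclideanSpace ℝ (Fin n)))
    (u : EuclideanSpace ℝ (Fin n) → ℝ) : Prop :=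
  ∃ U : Set (EuclideanSpace ℝ (Fin n)), IsOpen U ∧ closure Ω ⊆ U ∧ ContDiffOn ℝ (⊤ : ℕ∞) u U


section AuxLemmas
open Set

lemma ibp_zero {n : ℕ} {g : EuclideanSpace ℝ (Fin n) → ℝ} {v : EuclideanSpace ℝ (Fin n)}
    (hd : Differentiable ℝ g) (hi : Integrable g) (hi' : Integrable fun x => fderiv ℝ g x v) :
    ∫ x, fderiv ℝ g x v = 0 := by
  have h := integral_mul_fderiv_eq_neg_fderiv_mul_of_integrable
    (μ := (volume : Measure (EuclideanSpace ℝ (Fin n)))) (f := fun _ => (1:ℝ)) (g := g) (v := v)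
    ?_ ?_ ?_ (fun x _ => differentiableAt_const 1) (fun x _ => hd x)
  · simpa using h
  · simp [fderiv_const]
  · simpa using hi'
  · simpa using hi

lemma div_piece {n : ℕ} {Ω U : Set (EuclideanSpace ℝ (Fin n))}
    (hΩo : IsOpen Ω) (hΩb : Bornology.IsBounded Ω) (hU : IsOpen U) (hsub : closure Ω ⊆ U)
    {φ : EuclideanSpace ℝ (Fin n) → ℝ} (hφ : ContDiffOn ℝ (⊤:ℕ∞) φ U)
    (hφ0 : ∀ x ∈ frontier Ω, φ x = 0)
    (hφ'0 : ∀ x ∈ frontier Ω, fderiv ℝ φ x = 0)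
    (v : EuclideanSpace ℝ (Fin n)) :
    ∫ x in Ω, fderiv ℝ φ x v = 0 := by
  have hdiffU : ∀ x ∈ U, DifferentiableAt ℝ φ x := fun x hx =>
    (hφ.differentiableOn (by simp)).differentiableAt (hU.mem_nhds hx)
  set F : EuclideanSpace ℝ (Fin n) → ℝ := Ω.indicator φ with hF
  set D : EuclideanSpace ℝ (Fin n) → (EuclideanSpace ℝ (Fin n) →L[ℝ] ℝ) := Ω.indicator (fun y => fderiv ℝ φ y) with hD
  -- differentiability of F everywhere, with derivative D
  have hFd : ∀ x, HasFDerivAt F (D x) x := by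
    intro x
    by_cases hx : x ∈ Ω
    · have h1 : F =ᶠ[nhds x] φ := by
        filter_upwards [hΩo.mem_nhds hx] with y hy
        simp [hF, indicator_of_mem hy]
      have h2 : HasFDerivAt φ (fderiv ℝ φ x) x :=
        (hdiffU x (hsub (subset_closure hx))).hasFDerivAt
      have : D x = fderiv ℝ φ x := indicator_of_mem hx _
      rw [this]
      exact h2.congr_of_eventuallyEq h1
    · have hDx : D x = 0 := indicator_of_notMem hx _
      rw [hDx]
      by_cases hx' : x ∈ closure Ω
      · -- frontier point
        have hfr : x ∈ frontier Ω := ⟨hx', by rwa [hΩo.interior_eq]⟩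
        have hd0 : HasFDerivAt φ (0 : EuclideanSpace ℝ (Fin n) →L[ℝ] ℝ) x := by
          have := (hdiffU x (hsub hx')).hasFDerivAt
          rwa [hφ'0 x hfr] at this
        rw [hasFDerivAt_iff_isLittleO] at hd0 ⊢
        have hbig : (fun y => F y - F x - (0 : EuclideanSpace ℝ (Fin n) →L[ℝ] ℝ) (y - x)) =O[nhds x]
            (fun y => φ y - φ x - (0 : EuclideanSpace ℝ (Fin n) →L[ℝ] ℝ) (y - x)) := by
          apply Asymptotics.isBigO_of_le
          intro y
          simp only [ContinuousLinearMap.zero_apply, sub_zero]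
          have hFx : F x = 0 := indicator_of_notMem hx _
          have hφx : φ x = 0 := hφ0 x hfr
          rw [hFx, hφx, sub_zero, sub_zero]
          by_cases hy : y ∈ Ω
          · simp [hF, indicator_of_mem hy]
          · simp [hF, indicator_of_notMem hy]
        exact hbig.trans_isLittleO hd0
      · have h1 : F =ᶠ[nhds x] (fun _ => 0) := by
          filter_upwards [(isOpen_compl_iff.mpr isClosed_closure).mem_nhds hx'] with y hy
          exact indicator_of_notMem (fun h => hy (subset_closure h)) _
        exact (hasFDerivAt_const (0:ℝ) x).congr_of_eventuallyEq h1
  have hFdiff : Differentiable ℝ F := fun x => (hFd x).differentiableAt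
  -- continuity of x ↦ D x v
  have hfc : ContinuousOn (fderiv ℝ φ) U := hφ.continuousOn_fderiv_of_isOpen hU (by exact_mod_cast le_top)
  have hDc : Continuous (fun x => D x v) := by
    rw [continuous_iff_continuousAt]
    intro x
    by_cases hx : x ∈ Ω
    · have h1 : (fun y => D y v) =ᶠ[nhds x] (fun y => fderiv ℝ φ y v) := by
        filter_upwards [hΩo.mem_nhds hx] with y hy
        simp [hD, indicator_of_mem hy]
      have hxU : x ∈ U := hsub (subset_closure hx)
      have : ContinuousAt (fun y => fderiv ℝ φ y v) x := by
        have := (hfc x hxU).continuousAt (hU.mem_nhds hxU)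
        exact (ContinuousLinearMap.apply ℝ ℝ v).continuous.continuousAt.comp this
      exact this.congr h1.symm
    · by_cases hx' : x ∈ closure Ω
      · have hfr : x ∈ frontier Ω := ⟨hx', by rwa [hΩo.interior_eq]⟩
        have hDx : D x v = 0 := by rw [hD, indicator_of_notMem hx]; rfl
        rw [ContinuousAt, hDx]
        refine squeeze_zero_norm' (a := fun y => ‖fderiv ℝ φ y v‖) ?_ ?_
        · filter_upwards [hU.mem_nhds (hsub hx')] with y hy
          by_cases hyΩ : y ∈ Ω
          · simp only [hD, indicator_of_mem hyΩ, le_refl]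
          · simp only [hD, indicator_of_notMem hyΩ, ContinuousLinearMap.zero_apply,
              norm_zero, norm_nonneg]
        · have hca : ContinuousAt (fun y => fderiv ℝ φ y v) x := by
            have := (hfc x (hsub hx')).continuousAt (hU.mem_nhds (hsub hx'))
            exact (ContinuousLinearMap.apply ℝ ℝ v).continuous.continuousAt.comp this
          have h0 : fderiv ℝ φ x v = 0 := by rw [hφ'0 x hfr]; rfl
          have := hca.norm
          rwa [ContinuousAt, h0, norm_zero] at this
      · have h1 : (fun y => D y v) =ᶠ[nhds x] (fun _ => 0) := by
          filter_upwards [(isOpen_compl_iff.mpr isClosed_closure).mem_nhds hx'] with y hy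
          rw [hD, indicator_of_notMem (fun h => hy (subset_closure h))]; rfl
        exact continuousAt_const.congr h1.symm
  -- compact support
  have hcomp : IsCompact (closure Ω) := hΩb.isCompact_closure
  have hFsupp : HasCompactSupport F := by
    apply HasCompactSupport.intro hcomp
    intro x hx
    exact indicator_of_notMem (fun h => hx (subset_closure h)) _
  have hDsupp : HasCompactSupport (fun x => D x v) := by
    apply HasCompactSupport.intro hcomp
    intro x hx
    rw [hD, indicator_of_notMem (fun h => hx (subset_closure h))]; rfl
  have hFi : Integrable F := hFdiff.continuous.integrable_of_hasCompactSupport hFsupp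
  have hDi : Integrable (fun x => D x v) := hDc.integrable_of_hasCompactSupport hDsupp
  have hfd_eq : ∀ x, fderiv ℝ F x = D x := fun x => (hFd x).fderiv
  have hzero : ∫ x, D x v = 0 := by
    have : (fun x => D x v) = fun x => fderiv ℝ F x v := by
      funext x; rw [hfd_eq]
    rw [this]
    refine ibp_zero hFdiff hFi ?_
    rw [← this]; exact hDi
  calc ∫ x in Ω, fderiv ℝ φ x v = ∫ x, Ω.indicator (fun y => fderiv ℝ φ y v) x := by
        rw [integral_indicator hΩo.measurableSet]
    _ = ∫ x, D x v := by
        congr 1; funext x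
        by_cases hx : x ∈ Ω
        · simp [hD, indicator_of_mem hx]
        · rw [indicator_of_notMem hx, hD, indicator_of_notMem hx]; rfl
    _ = 0 := hzero

end AuxLemmas

/-- The key integral identity for the Gaussian shrinking soliton (Section 5). -/
theorem stmt13 {n : ℕ} (hn : 1 ≤ n) (Ω : Set (EuclideanSpace ℝ (Fin n)))
    (hΩo : IsOpen Ω) (hΩne : Ω.Nonempty) (hΩb : Bornology.IsBounded Ω)
    (u : EuclideanSpace ℝ (Fin n) → ℝ) (hu : SmoothNearClosure Ω u)
    (hub : ∀ x ∈ frontier Ω, u x = 0) :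
    ∑ α : Fin n,
        ∫ x, (2 * fderiv ℝ u x (EuclideanSpace.single α 1) - (x α / 2) * u x) ^ 2
          ∂(wMeasure Ω (fun x => ‖x‖ ^ 2 / 4))
      = 4 * (∫ x, ‖gradient u x‖ ^ 2 ∂(wMeasure Ω (fun x => ‖x‖ ^ 2 / 4)))
        + (n : ℝ) * (∫ x, (u x) ^ 2 ∂(wMeasure Ω (fun x => ‖x‖ ^ 2 / 4)))
        - (1 / 4) * ∫ x, ‖x‖ ^ 2 * (u x) ^ 2 ∂(wMeasure Ω (fun x => ‖x‖ ^ 2 / 4)) := by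
  classical
  obtain ⟨U, hUo, hsub, huC⟩ := hu
  -- notation
  set W : EuclideanSpace ℝ (Fin n) → ℝ := fun x => Real.exp (-(‖x‖^2/4)) with hWdef
  set d : Fin n → EuclideanSpace ℝ (Fin n) → ℝ :=
    fun α x => fderiv ℝ u x (EuclideanSpace.single α 1) with hddef
  have hWC : ContDiff ℝ (⊤:ℕ∞) W :=
    Real.contDiff_exp.comp (((contDiff_norm_sq ℝ).div_const 4).neg)
  have hWcont : Continuous W := hWC.continuous
  -- conversion of weighted integrals to set integrals
  have hconv : ∀ g : EuclideanSpace ℝ (Fin n) → ℝ,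
      ∫ x, g x ∂(wMeasure Ω (fun x => ‖x‖ ^ 2 / 4)) = ∫ x in Ω, W x * g x := by
    intro g
    have hmeas : Measurable (fun x : EuclideanSpace ℝ (Fin n) => (W x).toNNReal) :=
      hWcont.measurable.real_toNNReal
    rw [wMeasure]
    have hdens : (fun x : EuclideanSpace ℝ (Fin n) =>
        ENNReal.ofReal (Real.exp (-(‖x‖ ^ 2 / 4)))) =
        fun x => (((W x).toNNReal : NNReal) : ℝ≥0∞) := rfl
    rw [hdens, integral_withDensity_eq_integral_smul hmeas]
    apply integral_congr_ae
    filter_upwards with x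
    rw [NNReal.smul_def, Real.coe_toNNReal _ (Real.exp_nonneg _), smul_eq_mul]
  -- differentiability facts for u on U
  have huC' : ContDiffOn ℝ (⊤:ℕ∞) u U := huC.of_le (by simp)
  have hdiffU : ∀ x ∈ U, DifferentiableAt ℝ u x := fun x hx =>
    (huC.differentiableOn (by simp)).differentiableAt (hUo.mem_nhds hx)
  have hfc : ContinuousOn (fderiv ℝ u) U := huC.continuousOn_fderiv_of_isOpen hUo (by simp)
  have hcd : ∀ α : Fin n, ContinuousOn (d α) U := fun α =>
    (ContinuousLinearMap.apply ℝ ℝ (EuclideanSpace.single α (1:ℝ))).continuous.comp_continuousOn hfc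
  have hcu : ContinuousOn u U := huC.continuousOn
  -- integrability helper
  have hInt : ∀ g : EuclideanSpace ℝ (Fin n) → ℝ, ContinuousOn g U →
      IntegrableOn g Ω volume := by
    intro g hg
    have h1 : IntegrableOn g (closure Ω) volume :=
      (hg.mono hsub).integrableOn_compact hΩb.isCompact_closure
    exact h1.mono_set subset_closure
  -- gradient and norm expansions
  have hgradnorm : ∀ x, ‖gradient u x‖^2 = ∑ α, (d α x)^2 := by
    intro x
    have h2 : ∀ α : Fin n, gradient u x α = d α x := by
      intro α
      have h1 : gradient u x α = ⟪gradient u x, EuclideanSpace.single α 1⟫ := by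
        rw [EuclideanSpace.inner_single_right]; simp
      rw [h1]
      exact InnerProductSpace.toDual_symm_apply
    rw [EuclideanSpace.norm_eq, Real.sq_sqrt (by positivity)]
    exact Finset.sum_congr rfl fun α _ => by rw [Real.norm_eq_abs, sq_abs, h2 α]
  have hnormx : ∀ x : EuclideanSpace ℝ (Fin n), ‖x‖^2 = ∑ α, (x α)^2 := by
    intro x
    rw [EuclideanSpace.norm_eq, Real.sq_sqrt (by positivity)]
    exact Finset.sum_congr rfl fun α _ => by rw [Real.norm_eq_abs, sq_abs]
  -- the vector field pieces and their derivatives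
  set φ : Fin n → EuclideanSpace ℝ (Fin n) → ℝ :=
    fun α x => x α * ((u x * u x) * W x) with hφdef
  set L : Fin n → EuclideanSpace ℝ (Fin n) → (EuclideanSpace ℝ (Fin n) →L[ℝ] ℝ) :=
    fun α x =>
      x α • ((u x * u x) • (W x • ((-(1/4) : ℝ) • (2 • (innerSL ℝ x))))
              + W x • (u x • fderiv ℝ u x + u x • fderiv ℝ u x))
      + ((u x * u x) * W x) • (EuclideanSpace.proj α : EuclideanSpace ℝ (Fin n) →L[ℝ] ℝ)
    with hLdef
  have hφC : ∀ α, ContDiffOn ℝ (⊤:ℕ∞) (φ α) U := by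
    intro α
    exact (((EuclideanSpace.proj α : EuclideanSpace ℝ (Fin n) →L[ℝ] ℝ).contDiff).contDiffOn).mul
      ((huC'.mul huC').mul hWC.contDiffOn)
  have hder : ∀ α, ∀ x ∈ U, HasFDerivAt (φ α) (L α x) x := by
    intro α x hx
    have hdu : HasFDerivAt u (fderiv ℝ u x) x := (hdiffU x hx).hasFDerivAt
    have h1 : HasFDerivAt (fun y : EuclideanSpace ℝ (Fin n) => ‖y‖^2) (2 • innerSL ℝ x) x :=
      (hasStrictFDerivAt_norm_sq x).hasFDerivAt
    have h2 := h1.const_mul (-(1/4) : ℝ)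
    have h3 : (fun y : EuclideanSpace ℝ (Fin n) => -(1/4) * ‖y‖^2) = fun y => -(‖y‖^2/4) := by
      funext y; ring
    rw [h3] at h2
    have hW : HasFDerivAt W (W x • ((-(1/4) : ℝ) • (2 • (innerSL ℝ x)))) x := h2.exp
    have huu : HasFDerivAt (fun y => u y * u y)
        (u x • fderiv ℝ u x + u x • fderiv ℝ u x) x := hdu.mul hdu
    have h4 := huu.mul hW
    have hproj : HasFDerivAt (fun y : EuclideanSpace ℝ (Fin n) => y α)
        (EuclideanSpace.proj α : EuclideanSpace ℝ (Fin n) →L[ℝ] ℝ) x :=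
      (EuclideanSpace.proj α : EuclideanSpace ℝ (Fin n) →L[ℝ] ℝ).hasFDerivAt
    exact hproj.mul h4
  have hfrcl : frontier Ω ⊆ U := fun x hx => hsub (frontier_subset_closure hx)
  have hφ0 : ∀ α, ∀ x ∈ frontier Ω, φ α x = 0 := by
    intro α x hx
    simp [hφdef, hub x hx]
  have hL0 : ∀ α, ∀ x ∈ frontier Ω, fderiv ℝ (φ α) x = 0 := by
    intro α x hx
    rw [(hder α x (hfrcl hx)).fderiv]
    simp [hLdef, hub x hx]
  have hLeval : ∀ α, ∀ x ∈ Ω, fderiv ℝ (φ α) x (EuclideanSpace.single α 1) =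
      W x * ((u x)^2 + 2*(x α)*(u x)*(d α x) - (x α)^2/2*((u x)^2)) := by
    intro α x hx
    rw [(hder α x (hsub (subset_closure hx))).fderiv]
    have e1 : (innerSL ℝ x) (EuclideanSpace.single α (1:ℝ)) = x α := by
      simp [EuclideanSpace.inner_single_right]
    have e2 : (EuclideanSpace.proj α : EuclideanSpace ℝ (Fin n) →L[ℝ] ℝ)
        (EuclideanSpace.single α (1:ℝ)) = 1 := by simp
    simp only [hLdef, ContinuousLinearMap.add_apply, ContinuousLinearMap.smul_apply,
      ContinuousLinearMap.coe_smul', Pi.smul_apply, e1, e2, smul_eq_mul]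
    rw [hddef]
    ring
  -- divergence identity per coordinate
  have hJ : ∀ α : Fin n, ∫ x in Ω,
      W x * ((u x)^2 + 2*(x α)*(u x)*(d α x) - (x α)^2/2*((u x)^2)) = 0 := by
    intro α
    have h0 := div_piece hΩo hΩb hUo hsub (hφC α) (hφ0 α) (hL0 α) (EuclideanSpace.single α 1)
    rw [← h0]
    exact setIntegral_congr_fun hΩo.measurableSet (fun x hx => (hLeval α x hx).symm)
  -- rewrite all weighted integrals
  simp only [hconv]
  -- expand gradient and norm integrals as sums
  have hIB : ∀ α : Fin n, IntegrableOn (fun x => W x * (d α x)^2) Ω volume := fun α =>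
    hInt _ (((hWcont.continuousOn).mul ((hcd α).pow 2)))
  have hIC : IntegrableOn (fun x => W x * (u x)^2) Ω volume :=
    hInt _ ((hWcont.continuousOn).mul (hcu.pow 2))
  have hIE : ∀ α : Fin n, IntegrableOn (fun x => W x * ((x α)^2 * (u x)^2)) Ω volume := fun α =>
    hInt _ ((hWcont.continuousOn).mul
      ((((EuclideanSpace.proj α : EuclideanSpace ℝ (Fin n) →L[ℝ] ℝ).continuous.continuousOn).pow 2).mul
        (hcu.pow 2)))
  have e1 : ∫ x in Ω, W x * ‖gradient u x‖^2 = ∑ α, ∫ x in Ω, W x * (d α x)^2 := by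
    rw [← integral_finset_sum _ (fun α _ => hIB α)]
    apply integral_congr_ae
    filter_upwards with x
    rw [hgradnorm, Finset.mul_sum]
  have e2 : ∫ x in Ω, W x * (‖x‖^2 * (u x)^2) = ∑ α, ∫ x in Ω, W x * ((x α)^2 * (u x)^2) := by
    rw [← integral_finset_sum _ (fun α _ => hIE α)]
    apply integral_congr_ae
    filter_upwards with x
    rw [hnormx, Finset.sum_mul, Finset.mul_sum]
  have e3 : (n : ℝ) * (∫ x in Ω, W x * (u x)^2) = ∑ _α : Fin n, ∫ x in Ω, W x * (u x)^2 := by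
    rw [Finset.sum_const, Finset.card_univ, Fintype.card_fin, nsmul_eq_mul]
  rw [e1, e2, e3, Finset.mul_sum, Finset.mul_sum, ← Finset.sum_add_distrib,
    ← Finset.sum_sub_distrib]
  apply Finset.sum_congr rfl
  intro α _
  -- per-coordinate identity
  have hsplit : ∫ x in Ω, W x * (2 * d α x - (x α / 2) * u x)^2 =
      (∫ x in Ω, (4 * (W x * (d α x)^2) + W x * (u x)^2 - (1/4) * (W x * ((x α)^2 * (u x)^2)))) -
      ∫ x in Ω, W x * ((u x)^2 + 2*(x α)*(u x)*(d α x) - (x α)^2/2*((u x)^2)) := by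
    rw [← integral_sub]
    · apply integral_congr_ae
      filter_upwards with x
      ring
    · exact (((hIB α).const_mul 4).add hIC).sub ((hIE α).const_mul (1/4))
    · exact hInt _ (by
        apply hWcont.continuousOn.mul
        apply ContinuousOn.sub
        · exact (hcu.pow 2).add ((((continuous_const.mul
            ((EuclideanSpace.proj α : EuclideanSpace ℝ (Fin n) →L[ℝ] ℝ).continuous)).continuousOn.mul
            hcu).mul (hcd α)))
        · exact ((((EuclideanSpace.proj α : EuclideanSpace ℝ (Fin n) →L[ℝ] ℝ).continuous.continuousOn).pow 2).div_const 2 |>.mul (hcu.pow 2)))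
  rw [hsplit, hJ α, sub_zero]
  have hfg : Integrable (fun x => 4 * (W x * (d α x)^2) + W x * (u x)^2) (volume.restrict Ω) :=
    ((hIB α).const_mul 4).add hIC
  have hh : Integrable (fun x => (1/4 : ℝ) * (W x * ((x α)^2 * (u x)^2))) (volume.restrict Ω) :=
    (hIE α).const_mul (1/4)
  rw [integral_sub hfg hh, integral_add ((hIB α).const_mul 4) hIC,
    integral_const_mul, integral_const_mul]
end
end

section
/- Let n ≥ 1 be an integer, let Ω ⊆ ℝⁿ be a nonempty bounded open set with smooth boundary, let f : ℝⁿ → ℝ be smooth, and let μ_f be the measure on Ω with density x ↦ e^{−f(x)} with respect to Lebesgue measure. Let u be a real-valued function smooth on a neighborhood of the closure of Ω, vanishing on ∂Ω, with ∫_Ω u² dμ_f = 1, and set λ = ∫_Ω |∇u|² dμ_f. Then Σ_{j=1}^n ∫_Ω (2 ∂_j u − u ∂_j f)² dμ_f ≤ 4λ + sup_{x ∈ closure(Ω)} |∇f(x)|² + 4n · ( sup_{x ∈ closure(Ω)} |∇f(x)| ) · √λ. -/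
open MeasureTheory Real Filter
open scoped ENNReal RealInnerProductSpace

noncomputable section

/-- Auxiliary: the weighted measure of a bounded set with continuous weight is finite. -/
theorem wM_finite {n : ℕ} (Ω : Set (EuclideanSpace ℝ (Fin n))) (hΩo : IsOpen Ω)
    (hΩb : Bornology.IsBounded Ω)
    (f : EuclideanSpace ℝ (Fin n) → ℝ) (hf : Continuous f) :
    IsFiniteMeasure (wMeasure Ω f) := by
  have hKc : IsCompact (closure Ω) := hΩb.isCompact_closure
  obtain ⟨C, hC⟩ := hKc.exists_bound_of_continuousOn
    ((Real.continuous_exp.comp hf.neg).continuousOn)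
  constructor
  rw [wMeasure, withDensity_apply _ MeasurableSet.univ, Measure.restrict_univ]
  calc ∫⁻ x, ENNReal.ofReal (Real.exp (-f x)) ∂volume.restrict Ω
      ≤ ∫⁻ _, ENNReal.ofReal C ∂volume.restrict Ω := by
        refine lintegral_mono_ae ?_
        filter_upwards [ae_restrict_mem hΩo.measurableSet] with x hx
        have := hC x (subset_closure hx)
        simp only [Function.comp_apply, Real.norm_eq_abs, Real.abs_exp] at this
        exact ENNReal.ofReal_le_ofReal this
    _ < ⊤ := by
        rw [lintegral_const, Measure.restrict_apply_univ]
        exact ENNReal.mul_lt_top ENNReal.ofReal_lt_top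
          ((measure_mono subset_closure).trans_lt hKc.measure_lt_top)

/-- Auxiliary: continuous-near-the-closure functions are integrable for the weighted measure. -/
theorem wM_integrable {n : ℕ} (Ω : Set (EuclideanSpace ℝ (Fin n))) (hΩo : IsOpen Ω)
    (hΩb : Bornology.IsBounded Ω)
    (f : EuclideanSpace ℝ (Fin n) → ℝ) (hf : Continuous f)
    (U : Set (EuclideanSpace ℝ (Fin n))) (hUc : closure Ω ⊆ U)
    (g : EuclideanSpace ℝ (Fin n) → ℝ) (hg : ContinuousOn g U) :
    Integrable g (wMeasure Ω f) := by
  haveI := wM_finite Ω hΩo hΩb f hf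
  have hKc : IsCompact (closure Ω) := hΩb.isCompact_closure
  obtain ⟨C, hC⟩ := hKc.exists_bound_of_continuousOn (hg.mono hUc)
  have hmem : ∀ᵐ x ∂(wMeasure Ω f), x ∈ Ω :=
    (withDensity_absolutelyContinuous _ _).ae_le (ae_restrict_mem hΩo.measurableSet)
  refine Integrable.mono' (integrable_const C) ?_ ?_
  · exact ((hg.mono (subset_closure.trans hUc)).aestronglyMeasurable
      hΩo.measurableSet).mono_ac (withDensity_absolutelyContinuous _ _)
  · filter_upwards [hmem] with x hx
    exact hC x (subset_closure hx)

/-- Auxiliary: coordinates of the gradient. -/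
theorem fderiv_single_eq_grad {n : ℕ} (u : EuclideanSpace ℝ (Fin n) → ℝ)
    (x : EuclideanSpace ℝ (Fin n)) (j : Fin n) :
    fderiv ℝ u x (EuclideanSpace.single j 1) = (gradient u x) j := by
  rw [gradient]
  rw [show fderiv ℝ u x
      = InnerProductSpace.toDual ℝ _ ((InnerProductSpace.toDual ℝ _).symm (fderiv ℝ u x)) by simp]
  rw [InnerProductSpace.toDual_apply_apply, real_inner_comm, EuclideanSpace.inner_single_left]
  simp

set_option maxHeartbeats 1000000

/-- The estimate (7.8) of Section 7, Euclidean-factor form. -/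
theorem stmt14 {n : ℕ} (hn : 1 ≤ n) (Ω : Set (EuclideanSpace ℝ (Fin n)))
    (hΩo : IsOpen Ω) (hΩne : Ω.Nonempty) (hΩb : Bornology.IsBounded Ω)
    (f : EuclideanSpace ℝ (Fin n) → ℝ) (hf : ContDiff ℝ (⊤ : ℕ∞) f)
    (u : EuclideanSpace ℝ (Fin n) → ℝ) (hu : SmoothNearClosure Ω u)
    (hub : ∀ x ∈ frontier Ω, u x = 0)
    (hnorm : ∫ x, (u x) ^ 2 ∂(wMeasure Ω f) = 1)
    (lam : ℝ) (hlam : lam = ∫ x, ‖gradient u x‖ ^ 2 ∂(wMeasure Ω f)) :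
    ∑ j : Fin n,
        ∫ x, (2 * fderiv ℝ u x (EuclideanSpace.single j 1)
            - u x * fderiv ℝ f x (EuclideanSpace.single j 1)) ^ 2 ∂(wMeasure Ω f)
      ≤ 4 * lam + sSup ((fun x => ‖gradient f x‖ ^ 2) '' closure Ω)
        + 4 * (n : ℝ) * sSup ((fun x => ‖gradient f x‖) '' closure Ω) * Real.sqrt lam := by
  obtain ⟨U, hUo, hUc, huC⟩ := hu
  set μ := wMeasure Ω f with hμ
  haveI := wM_finite Ω hΩo hΩb f hf.continuous
  have hKc : IsCompact (closure Ω) := hΩb.isCompact_closure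
  have key : ∀ g : EuclideanSpace ℝ (Fin n) → ℝ, ContinuousOn g U → Integrable g μ :=
    fun g hg => wM_integrable Ω hΩo hΩb f hf.continuous U hUc g hg
  -- continuity facts
  have cdu : ContinuousOn (fderiv ℝ u) U := huC.continuousOn_fderiv_of_isOpen hUo (by simp)
  have cu : ContinuousOn u U := huC.continuousOn
  have cgu : ContinuousOn (gradient u) U := by
    have h : gradient u = fun x => (InnerProductSpace.toDual ℝ _).symm (fderiv ℝ u x) := rfl
    rw [h]
    exact (InnerProductSpace.toDual ℝ _).symm.continuous.comp_continuousOn cdu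
  have cngu : ContinuousOn (fun x => ‖gradient u x‖) U := cgu.norm
  have cdf : Continuous (fderiv ℝ f) := hf.continuous_fderiv (by simp)
  have cgf : Continuous (gradient f) := by
    have h : gradient f = fun x => (InnerProductSpace.toDual ℝ _).symm (fderiv ℝ f x) := rfl
    rw [h]
    exact (InnerProductSpace.toDual ℝ _).symm.continuous.comp cdf
  have cngf : Continuous (fun x => ‖gradient f x‖) := cgf.norm
  -- sups
  set S := sSup ((fun x => ‖gradient f x‖) '' closure Ω) with hS
  set S2 := sSup ((fun x => ‖gradient f x‖ ^ 2) '' closure Ω) with hS2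
  have hbddS : BddAbove ((fun x => ‖gradient f x‖) '' closure Ω) :=
    (hKc.image_of_continuousOn cngf.continuousOn).bddAbove
  have hbddS2 : BddAbove ((fun x => ‖gradient f x‖ ^ 2) '' closure Ω) :=
    (hKc.image_of_continuousOn ((cngf.pow 2).continuousOn)).bddAbove
  have hxS : ∀ x ∈ closure Ω, ‖gradient f x‖ ≤ S := fun x hx => le_csSup hbddS ⟨x, hx, rfl⟩
  have hxS2 : ∀ x ∈ closure Ω, ‖gradient f x‖ ^ 2 ≤ S2 := fun x hx => le_csSup hbddS2 ⟨x, hx, rfl⟩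
  obtain ⟨x0, hx0⟩ := hΩne
  have hS0 : 0 ≤ S := le_trans (norm_nonneg _) (hxS x0 (subset_closure hx0))
  have hmem : ∀ᵐ x ∂μ, x ∈ Ω :=
    (withDensity_absolutelyContinuous _ _).ae_le (ae_restrict_mem hΩo.measurableSet)
  -- the coordinate functions
  set g : Fin n → EuclideanSpace ℝ (Fin n) → ℝ := fun j x =>
    2 * fderiv ℝ u x (EuclideanSpace.single j 1)
      - u x * fderiv ℝ f x (EuclideanSpace.single j 1) with hg
  have cgj : ∀ j, ContinuousOn (fun x => (g j x) ^ 2) U := by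
    intro j
    exact ((continuousOn_const.mul (cdu.clm_apply continuousOn_const)).sub
      (cu.mul ((cdf.clm_apply continuous_const).continuousOn))).pow 2
  -- pointwise bound
  have hpt : ∀ x ∈ closure Ω, ∑ j, (g j x) ^ 2
      ≤ 4 * ‖gradient u x‖ ^ 2 + S2 * (u x) ^ 2 + 4 * S * (|u x| * ‖gradient u x‖) := by
    intro x hx
    set G := gradient u x
    set H := gradient f x
    set c := u x
    have hsum : ∑ j, (g j x) ^ 2 = ‖(2 : ℝ) • G - c • H‖ ^ 2 := by
      rw [PiLp.norm_sq_eq_of_L2]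
      refine Finset.sum_congr rfl fun j _ => ?_
      rw [hg]
      simp only [fderiv_single_eq_grad, PiLp.sub_apply, PiLp.smul_apply, smul_eq_mul,
        Real.norm_eq_abs, sq_abs]
      rfl
    rw [hsum]
    have h1 : ‖(2 : ℝ) • G - c • H‖ ≤ 2 * ‖G‖ + |c| * ‖H‖ := by
      refine (norm_sub_le _ _).trans ?_
      rw [norm_smul, norm_smul]
      simp [Real.norm_eq_abs]
    have h4 : ‖(2 : ℝ) • G - c • H‖ ^ 2 ≤ (2 * ‖G‖ + |c| * ‖H‖) ^ 2 :=
      pow_le_pow_left₀ (norm_nonneg _) h1 2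
    have h2 : ‖H‖ ≤ S := hxS x hx
    have h3 : ‖H‖ ^ 2 ≤ S2 := hxS2 x hx
    have hc2 : |c| ^ 2 = c ^ 2 := sq_abs c
    nlinarith [mul_le_mul_of_nonneg_left h2 (mul_nonneg (abs_nonneg c) (norm_nonneg G)),
      mul_le_mul_of_nonneg_left h3 (sq_nonneg c), norm_nonneg G, abs_nonneg c, sq_nonneg c]
  -- integrability
  have int_gj : ∀ j, Integrable (fun x => (g j x) ^ 2) μ := fun j => key _ (cgj j)
  have int_sum : Integrable (fun x => ∑ j, (g j x) ^ 2) μ :=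
    integrable_finset_sum _ fun j _ => int_gj j
  have int_u2 : Integrable (fun x => (u x) ^ 2) μ := key _ (cu.pow 2)
  have int_gu2 : Integrable (fun x => ‖gradient u x‖ ^ 2) μ := key _ (cngu.pow 2)
  have int_cross : Integrable (fun x => |u x| * ‖gradient u x‖) μ := key _ (cu.abs.mul cngu)
  have int_a : Integrable (fun x => 4 * ‖gradient u x‖ ^ 2 + S2 * (u x) ^ 2) μ :=
    (int_gu2.const_mul 4).add (int_u2.const_mul S2)
  have int_rhs : Integrable (fun x =>
      4 * ‖gradient u x‖ ^ 2 + S2 * (u x) ^ 2 + 4 * S * (|u x| * ‖gradient u x‖)) μ :=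
    int_a.add (int_cross.const_mul (4 * S))
  set I := ∫ x, |u x| * ‖gradient u x‖ ∂μ with hI
  have hlam0 : 0 ≤ lam := hlam ▸ integral_nonneg fun x => sq_nonneg _
  have hI0 : 0 ≤ I := integral_nonneg fun x => mul_nonneg (abs_nonneg _) (norm_nonneg _)
  -- AM-GM for the cross term
  have hamgm : ∀ t : ℝ, 0 < t → I ≤ (t + lam / t) / 2 := by
    intro t ht
    have hb : ∀ x, |u x| * ‖gradient u x‖ ≤ (t * (u x) ^ 2 + ‖gradient u x‖ ^ 2 / t) / 2 := by
      intro x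
      have h2 := sq_abs (u x)
      rw [le_div_iff₀ (by norm_num : (0:ℝ) < 2), ← sub_nonneg]
      have he : t * u x ^ 2 + ‖gradient u x‖ ^ 2 / t - |u x| * ‖gradient u x‖ * 2
          = (t * |u x| - ‖gradient u x‖) ^ 2 / t := by
        field_simp; rw [← h2]; ring
      rw [he]; positivity
    have intb1 : Integrable (fun x => t * (u x) ^ 2 + ‖gradient u x‖ ^ 2 / t) μ :=
      (int_u2.const_mul t).add (int_gu2.div_const t)
    calc I ≤ ∫ x, (t * (u x) ^ 2 + ‖gradient u x‖ ^ 2 / t) / 2 ∂μ :=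
          integral_mono_ae int_cross (intb1.div_const 2) (Filter.Eventually.of_forall hb)
      _ = (t + lam / t) / 2 := by
          rw [integral_div, integral_add (int_u2.const_mul t) (int_gu2.div_const t),
            integral_const_mul, integral_div, hnorm, ← hlam]
          ring
  have hIle : I ≤ Real.sqrt lam := by
    rcases eq_or_lt_of_le hlam0 with h0 | h0
    · have hle : I ≤ 0 := by
        refine le_of_forall_pos_le_add fun ε hε => ?_
        have h := hamgm (2 * ε) (by linarith)
        rw [← h0] at h
        calc I ≤ (2 * ε + 0 / (2 * ε)) / 2 := h
          _ = 0 + ε := by ring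
      rw [← h0, Real.sqrt_zero]; exact hle
    · have h := hamgm (Real.sqrt lam) (Real.sqrt_pos.mpr h0)
      rw [Real.div_sqrt] at h
      linarith
  -- put everything together
  have step1 : ∑ j : Fin n, ∫ x, (g j x) ^ 2 ∂μ = ∫ x, ∑ j, (g j x) ^ 2 ∂μ :=
    (integral_finset_sum _ fun j _ => int_gj j).symm
  have step2 : ∫ x, ∑ j, (g j x) ^ 2 ∂μ ≤ ∫ x,
      4 * ‖gradient u x‖ ^ 2 + S2 * (u x) ^ 2 + 4 * S * (|u x| * ‖gradient u x‖) ∂μ := by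
    refine integral_mono_ae int_sum int_rhs ?_
    filter_upwards [hmem] with x hx
    exact hpt x (subset_closure hx)
  have step3 : ∫ x, 4 * ‖gradient u x‖ ^ 2 + S2 * (u x) ^ 2
      + 4 * S * (|u x| * ‖gradient u x‖) ∂μ = 4 * lam + S2 + 4 * S * I := by
    rw [integral_add int_a (int_cross.const_mul (4 * S)),
      integral_add (int_gu2.const_mul 4) (int_u2.const_mul S2),
      integral_const_mul, integral_const_mul, integral_const_mul, hnorm, ← hlam, ← hI]
    ring
  have hn1 : (1 : ℝ) ≤ (n : ℝ) := by exact_mod_cast hn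
  show ∑ j : Fin n, ∫ x, (g j x) ^ 2 ∂μ ≤ 4 * lam + S2 + 4 * (n : ℝ) * S * Real.sqrt lam
  rw [step1]
  refine (step2.trans_eq step3).trans ?_
  nlinarith [mul_le_mul_of_nonneg_left hIle hS0, Real.sqrt_nonneg lam,
    mul_nonneg hS0 (Real.sqrt_nonneg lam)]
end
end

section
/- Let n ≥ 1 and k ≥ 1 be integers and let 0 < λ_1 ≤ λ_2 ≤ ⋯ ≤ λ_{k+1} be real numbers satisfying Yang's first inequality Σ_{i=1}^k (λ_{k+1} − λ_i)² ≤ (4/n) Σ_{i=1}^k (λ_{k+1} − λ_i) λ_i. Then Yang's second inequality holds: λ_{k+1} ≤ (1/k)(1 + 4/n) Σ_{i=1}^k λ_i. -/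
/-!
Write `Λ = λ_{k+1}`, `S = ∑ λ_i` and `Q = ∑ λ_i²`. Yang's first inequality reads
`kΛ² - (2 + a)ΛS + (1 + a)Q ≤ 0` with `a = 4/n`, and Cauchy–Schwarz `S² ≤ kQ` turns it into
`(kΛ - S)(kΛ - (1 + a)S) ≤ 0`. Since `S ≥ 0`, `kΛ` lies between the two roots, so `kΛ ≤ (1 + a)S`.
-/

open Finset

lemma le_of_sub_mul_sub_nonpos {x s c : ℝ} (hs : 0 ≤ s) (hc : 1 ≤ c)
    (h : (x - s) * (x - c * s) ≤ 0) : x ≤ c * s := by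
  by_contra! hx
  have hxs : s < x := lt_of_le_of_lt (le_mul_of_one_le_left hs hc) hx
  nlinarith [mul_pos (sub_pos.2 hxs) (sub_pos.2 hx)]

section Yang

variable {ι : Type*} (s : Finset ι) (f : ι → ℝ) (Λ : ℝ)

lemma sum_sub_sq_eq :
    ∑ i ∈ s, (Λ - f i) ^ 2 = #s * Λ ^ 2 - 2 * Λ * ∑ i ∈ s, f i + ∑ i ∈ s, f i ^ 2 := by
  simp only [sub_sq, sum_add_distrib, sum_sub_distrib, sum_const, nsmul_eq_mul, mul_sum]

lemma sum_sub_mul_eq : ∑ i ∈ s, (Λ - f i) * f i = Λ * ∑ i ∈ s, f i - ∑ i ∈ s, f i ^ 2 := by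
  simp only [sub_mul, sum_sub_distrib, mul_sum, sq]

lemma card_mul_le_one_add_mul_sum_of_sum_sub_sq_le {a : ℝ} (ha : 0 ≤ a)
    (hS : 0 ≤ ∑ i ∈ s, f i)
    (h : ∑ i ∈ s, (Λ - f i) ^ 2 ≤ a * ∑ i ∈ s, (Λ - f i) * f i) :
    #s * Λ ≤ (1 + a) * ∑ i ∈ s, f i := by
  rw [sum_sub_sq_eq, sum_sub_mul_eq] at h
  have hCS := sq_sum_le_card_mul_sum_sq (s := s) (f := f)
  refine le_of_sub_mul_sub_nonpos hS (by linarith) ?_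
  nlinarith [mul_le_mul_of_nonneg_left h (Nat.cast_nonneg (α := ℝ) #s),
    mul_le_mul_of_nonneg_left hCS (by linarith : (0 : ℝ) ≤ 1 + a)]

end Yang

lemma sum_Icc_nonneg_of_le_succ {k : ℕ} {lam : ℕ → ℝ} (hpos : 0 < lam 1)
    (hmono : ∀ i, 1 ≤ i → i ≤ k → lam i ≤ lam (i + 1)) :
    0 ≤ ∑ i ∈ Icc 1 k, lam i := by
  have hmon : MonotoneOn lam (Set.Icc 1 (k + 1)) :=
    monotoneOn_of_le_succ Set.ordConnected_Icc fun i _ hi hi' =>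
      hmono i hi.1 (by simpa using hi'.2)
  refine sum_nonneg fun i hi => hpos.le.trans ?_
  rw [mem_Icc] at hi
  exact hmon ⟨le_rfl, by omega⟩ ⟨hi.1, by omega⟩ hi.1

theorem stmt18_general (n k : ℕ) (hk : 1 ≤ k) (lam : ℕ → ℝ)
    (hpos : 0 < lam 1)
    (hmono : ∀ i, 1 ≤ i → i ≤ k → lam i ≤ lam (i + 1))
    (hyang : ∑ i ∈ Finset.Icc 1 k, (lam (k + 1) - lam i) ^ 2
      ≤ (4 / (n : ℝ)) * ∑ i ∈ Finset.Icc 1 k, (lam (k + 1) - lam i) * lam i) :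
    lam (k + 1) ≤ (1 / (k : ℝ)) * (1 + 4 / (n : ℝ)) * ∑ i ∈ Finset.Icc 1 k, lam i := by
  have hk0 : (0 : ℝ) < k := by exact_mod_cast hk
  have hsecond := card_mul_le_one_add_mul_sum_of_sum_sub_sq_le _ _ _ (by positivity)
    (sum_Icc_nonneg_of_le_succ hpos hmono) hyang
  rw [Nat.card_Icc, Nat.add_sub_cancel] at hsecond
  rw [mul_assoc, one_div_mul_eq_div, le_div_iff₀ hk0, mul_comm]
  exact hsecond

/-- Yang's first inequality implies Yang's second inequality. -/
theorem stmt18 (n k : ℕ) (hn : 1 ≤ n) (hk : 1 ≤ k) (lam : ℕ → ℝ)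
    (hpos : 0 < lam 1)
    (hmono : ∀ i, 1 ≤ i → i ≤ k → lam i ≤ lam (i + 1))
    (hyang : ∑ i ∈ Finset.Icc 1 k, (lam (k + 1) - lam i) ^ 2
      ≤ (4 / (n : ℝ)) * ∑ i ∈ Finset.Icc 1 k, (lam (k + 1) - lam i) * lam i) :
    lam (k + 1) ≤ (1 / (k : ℝ)) * (1 + 4 / (n : ℝ)) * ∑ i ∈ Finset.Icc 1 k, lam i :=
  stmt18_general n k hk lam hpos hmono hyang
end
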